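/- If {e_i} and {f_j} are mutually unbiased orthonormal bases of a d-dimensional Hilbert space (i.e., |⟨e_i|f_j⟩| = 1/√d for all i,j), then for every density operator ρ and all i, j: (1/2)⟨e_i|ρ|e_i⟩ + (1/2)⟨f_j|ρ|f_j⟩ ≤ (1/2)(1 + 1/√d), which is strictly less than 1 for d ≥ 2. -/

import Mathlib

open Matrix
open scoped ComplexOrder

/-- The inner product ⟨v|w⟩ (conjugate-linear in the first argument). -/
noncomputable def bra {n : Type*} [Fintype n] (v w : n → ℂ) : ℂ := star v ⬝ᵥ w

/-!
For unit vectors `e`, `f` the operator `|e⟩⟨e| + |f⟩⟨f|` has norm `1 + |⟨e|f⟩|`, i.e.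
`|⟨e|w⟩|² + |⟨f|w⟩|² ≤ (1 + |⟨e|f⟩|) ‖w‖²` for every vector `w`. Writing `ρ = Bᴴ B`, both
`⟨v|ρ|v⟩` and `tr ρ` are sums over the conjugated rows `w` of `B`, of `|⟨v|w⟩|²` and `‖w‖²`
respectively, so the bound passes to density operators; for mutually unbiased bases
`|⟨e_i|f_j⟩| = 1/√d < 1` once `d ≥ 2`.
-/

open scoped InnerProductSpace ComplexConjugate

section InnerProductSpace

variable {𝕜 E : Type*} [RCLike 𝕜] [NormedAddCommGroup E] [InnerProductSpace 𝕜 E]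

-- Cauchy–Schwarz against `g = ⟪e, w⟫ • e + ⟪f, w⟫ • f`: if `s` is the left-hand side, then
-- `⟪g, w⟫ = s` and `‖g‖² ≤ (1 + ‖⟪e, f⟫‖) s`, so `s² ≤ (1 + ‖⟪e, f⟫‖) s ‖w‖²`.
theorem norm_inner_sq_add_norm_inner_sq_le {e f : E} (he : ‖e‖ = 1) (hf : ‖f‖ = 1) (w : E) :
    ‖⟪e, w⟫_𝕜‖ ^ 2 + ‖⟪f, w⟫_𝕜‖ ^ 2 ≤ (1 + ‖⟪e, f⟫_𝕜‖) * ‖w‖ ^ 2 := by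
  set α := ⟪e, w⟫_𝕜
  set β := ⟪f, w⟫_𝕜
  set s := ‖α‖ ^ 2 + ‖β‖ ^ 2
  set g := α • e + β • f
  have hgw : ⟪g, w⟫_𝕜 = s := by
    simp only [g, inner_add_left, inner_smul_left]
    change conj α * α + conj β * β = _
    simp only [RCLike.conj_mul, s]
    push_cast; ring
  have hcross : RCLike.re ⟪α • e, β • f⟫_𝕜 ≤ ‖α‖ * ‖β‖ * ‖⟪e, f⟫_𝕜‖ := by
    calc RCLike.re ⟪α • e, β • f⟫_𝕜 ≤ ‖⟪α • e, β • f⟫_𝕜‖ := RCLike.re_le_norm _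
      _ = ‖α‖ * ‖β‖ * ‖⟪e, f⟫_𝕜‖ := by
        rw [inner_smul_left, inner_smul_right, norm_mul, norm_mul, RCLike.norm_conj, mul_assoc]
  have hg : ‖g‖ ^ 2 ≤ (1 + ‖⟪e, f⟫_𝕜‖) * s := by
    rw [norm_add_sq (𝕜 := 𝕜), norm_smul, norm_smul, he, hf]
    nlinarith [sq_nonneg (‖α‖ - ‖β‖), norm_nonneg ⟪e, f⟫_𝕜]
  have hcs : s ^ 2 ≤ ‖g‖ ^ 2 * ‖w‖ ^ 2 := by
    have := norm_inner_le_norm (𝕜 := 𝕜) g w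
    rw [hgw, RCLike.norm_ofReal, abs_of_nonneg (by positivity)] at this
    rw [← mul_pow]; gcongr
  rcases (show 0 ≤ s by positivity).eq_or_lt with hs | hs
  · rw [← hs]; positivity
  · nlinarith [sq_nonneg ‖w‖]

end InnerProductSpace

section Matrix

variable {m n : Type*} [Fintype m] [Fintype n]

theorem bra_eq_inner (v w : n → ℂ) : bra v w = ⟪WithLp.toLp 2 v, WithLp.toLp 2 w⟫_ℂ := by
  rw [EuclideanSpace.inner_toLp_toLp, bra, dotProduct_comm]

theorem re_bra_self (v : n → ℂ) : (bra v v).re = ‖WithLp.toLp 2 v‖ ^ 2 := by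
  rw [bra_eq_inner]
  exact inner_self_eq_norm_sq (𝕜 := ℂ) _

theorem re_bra_conjTranspose_mul_mulVec (B : Matrix m n ℂ) (v : n → ℂ) :
    (bra v ((Bᴴ * B) *ᵥ v)).re = ∑ k, ‖bra v (star (B k))‖ ^ 2 := by
  have hrow : ∀ k, star ((B *ᵥ v) k) = bra v (star (B k)) := fun k => by
    rw [mulVec, bra, star_dotProduct, star_star]
  rw [bra, ← mulVec_mulVec, dotProduct_mulVec, ← star_mulVec, dotProduct, Complex.re_sum]
  refine Finset.sum_congr rfl fun k _ => ?_
  rw [← hrow, norm_star, Pi.star_apply, Complex.star_def, Complex.conj_mul']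
  norm_cast

theorem re_trace_conjTranspose_mul (B : Matrix m n ℂ) :
    (Bᴴ * B).trace.re = ∑ k, (bra (star (B k)) (star (B k))).re := by
  simp only [trace, diag, mul_apply, conjTranspose_apply, Complex.re_sum, bra, dotProduct,
    Pi.star_apply, star_star]
  rw [Finset.sum_comm]
  simp_rw [mul_comm]

theorem re_bra_mulVec_add_le_of_posSemidef {ρ : Matrix n n ℂ} (hρ : ρ.PosSemidef) {e f : n → ℂ}
    (he : bra e e = 1) (hf : bra f f = 1) :
    (bra e (ρ *ᵥ e)).re + (bra f (ρ *ᵥ f)).re ≤ (1 + ‖bra e f‖) * ρ.trace.re := by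
  classical
  obtain ⟨B, rfl⟩ : ∃ B : Matrix n n ℂ, ρ = Bᴴ * B := by
    open scoped MatrixOrder in
    exact CStarAlgebra.nonneg_iff_eq_star_mul_self.mp hρ.nonneg
  have hunit : ∀ v : n → ℂ, bra v v = 1 → ‖WithLp.toLp 2 v‖ = 1 := fun v hv => by
    rw [← pow_eq_one_iff_of_nonneg (norm_nonneg _) two_ne_zero, ← re_bra_self, hv, Complex.one_re]
  rw [re_bra_conjTranspose_mul_mulVec, re_bra_conjTranspose_mul_mulVec, re_trace_conjTranspose_mul,
    Finset.mul_sum, ← Finset.sum_add_distrib]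
  refine Finset.sum_le_sum fun k _ => ?_
  rw [re_bra_self, bra_eq_inner, bra_eq_inner, bra_eq_inner]
  exact norm_inner_sq_add_norm_inner_sq_le (hunit e he) (hunit f hf) _

end Matrix

/-- For mutually unbiased orthonormal bases {e_i}, {f_j} of a
d-dimensional Hilbert space (|⟨e_i|f_j⟩| = 1/√d), every density operator ρ satisfies
(1/2)⟨e_i|ρ|e_i⟩ + (1/2)⟨f_j|ρ|f_j⟩ ≤ (1/2)(1 + 1/√d) < 1 for d ≥ 2. -/
theorem stmt4 {d : ℕ} (hd : 2 ≤ d) (e f : Fin d → (Fin d → ℂ))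
    (he : ∀ i j, bra (e i) (e j) = if i = j then 1 else 0)
    (hf : ∀ i j, bra (f i) (f j) = if i = j then 1 else 0)
    (hmub : ∀ i j, ‖bra (e i) (f j)‖ = 1 / Real.sqrt d) :
    (∀ (ρ : Matrix (Fin d) (Fin d) ℂ), ρ.PosSemidef → ρ.trace = 1 →
      ∀ i j : Fin d,
        (1 / 2) * (bra (e i) (ρ.mulVec (e i))).re
          + (1 / 2) * (bra (f j) (ρ.mulVec (f j))).re
        ≤ (1 / 2) * (1 + 1 / Real.sqrt d)) ∧
    (1 / 2) * (1 + 1 / Real.sqrt d) < 1 := by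
  refine ⟨fun ρ hρ htr i j => ?_, ?_⟩
  · have h := re_bra_mulVec_add_le_of_posSemidef hρ (by simpa using he i i) (by simpa using hf j j)
    rw [hmub, htr, Complex.one_re, mul_one] at h
    linarith
  · have h1 : 1 < Real.sqrt d := by
      rw [Real.lt_sqrt zero_le_one, one_pow]
      exact_mod_cast hd
    have h2 : 1 / Real.sqrt d < 1 := (div_lt_one (by positivity)).mpr h1
    linarith
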